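/- Let Ω ⊂ ℝ^d (d ≥ 1) be a bounded Lebesgue-measurable set with |Ω| > 0, equipped with Lebesgue measure, and let d′ ≥ 1. Let ᾱ > 0, L ≥ 0, let α : [0,1] → [0, ᾱ] be Lipschitz continuous with Lipschitz constant L, and let f ∈ L²(Ω)^{d′}. Let ρ_n, ρ : Ω → [0,1] be measurable with ρ_n → ρ strongly in L²(Ω), let u ∈ L⁴(Ω)^{d′}, and let u_n ∈ L²(Ω)^{d′} with u_n → u strongly in L²(Ω)^{d′}. Then ∫_Ω (α(ρ_n)|u_n|² − 2 f·u_n) dx → ∫_Ω (α(ρ)|u|² − 2 f·u) dx as n → ∞. -/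

import Mathlib

/-!
Split `α(ρₙ)|uₙ|² - α(ρ)|u|² = α(ρₙ)(|uₙ|² - |u|²) + (α(ρₙ) - α(ρ))|u|²`. Pointwise, the
difference of the integrands is then bounded by `ᾱ|uₙ - u|² + 2ᾱ|uₙ - u||u| + |α(ρₙ) - α(ρ)||u|²
+ 2|uₙ - u||f|`. Apart from the first, each term is the product of a function tending to `0` in
`L²` with a fixed `L²` function (for the third one, `α(ρₙ) → α(ρ)` in `L²` because `α` is
Lipschitz, and `|u|² ∈ L²` because `u ∈ L⁴`), so its integral tends to `0` by Cauchy–Schwarz.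
-/

open MeasureTheory Filter Topology
open scoped NNReal

theorem abs_norm_sq_sub_norm_sq_le {E : Type*} [SeminormedAddCommGroup E] (v w : E) :
    |‖v‖ ^ 2 - ‖w‖ ^ 2| ≤ ‖v - w‖ ^ 2 + 2 * (‖v - w‖ * ‖w‖) := by
  have h := abs_norm_sub_norm_le v w
  rw [abs_le] at h ⊢
  constructor <;> nlinarith [norm_nonneg (v - w), norm_nonneg w, norm_nonneg v]

theorem abs_mul_norm_sq_sub_inner_sub_le {E : Type*} [NormedAddCommGroup E]
    [InnerProductSpace ℝ E] {abar a a' : ℝ} (ha : |a| ≤ abar) (F v w : E) :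
    |(a * ‖v‖ ^ 2 - 2 * inner ℝ F v) - (a' * ‖w‖ ^ 2 - 2 * inner ℝ F w)| ≤
      abar * ‖v - w‖ ^ 2 + 2 * abar * (‖v - w‖ * ‖w‖) + |a - a'| * ‖w‖ ^ 2
        + 2 * (‖v - w‖ * ‖F‖) := by
  have hsq : |a * (‖v‖ ^ 2 - ‖w‖ ^ 2)| ≤ abar * (‖v - w‖ ^ 2 + 2 * (‖v - w‖ * ‖w‖)) := by
    rw [abs_mul]
    exact mul_le_mul ha (abs_norm_sq_sub_norm_sq_le v w) (abs_nonneg _) ((abs_nonneg a).trans ha)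
  have hweight : |(a - a') * ‖w‖ ^ 2| = |a - a'| * ‖w‖ ^ 2 := by
    rw [abs_mul, abs_of_nonneg (sq_nonneg ‖w‖)]
  have hinner : |2 * (inner ℝ F v - inner ℝ F w)| ≤ 2 * (‖v - w‖ * ‖F‖) := by
    rw [abs_mul, abs_two, ← inner_sub_right, mul_comm ‖v - w‖]
    gcongr
    exact abs_real_inner_le_norm _ _
  calc |(a * ‖v‖ ^ 2 - 2 * inner ℝ F v) - (a' * ‖w‖ ^ 2 - 2 * inner ℝ F w)|
      = |a * (‖v‖ ^ 2 - ‖w‖ ^ 2) + (a - a') * ‖w‖ ^ 2 - 2 * (inner ℝ F v - inner ℝ F w)| := by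
        congr 1; ring
    _ ≤ |a * (‖v‖ ^ 2 - ‖w‖ ^ 2)| + |(a - a') * ‖w‖ ^ 2|
          + |2 * (inner ℝ F v - inner ℝ F w)| :=
        (abs_sub _ _).trans (by gcongr; exact abs_add_le _ _)
    _ ≤ _ := by linarith

theorem ContinuousOn.measurable_comp {X α β : Type*} [MeasurableSpace X]
    [TopologicalSpace α] [MeasurableSpace α] [OpensMeasurableSpace α]
    [TopologicalSpace β] [MeasurableSpace β] [BorelSpace β]
    {φ : α → β} {s : Set α} (hφ : ContinuousOn φ s) {g : X → α} (hg : Measurable g)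
    (hgs : ∀ x, g x ∈ s) : Measurable fun x => φ (g x) :=
  (continuousOn_iff_continuous_domRestrict.mp hφ).measurable.comp (hg.subtype_mk (h := hgs))

section
variable {X : Type*} [MeasurableSpace X] {μ : Measure X}
  {E F : Type*} [NormedAddCommGroup E] [NormedAddCommGroup F]

theorem integral_norm_mul_norm_le_sqrt {a : X → E} {b : X → F}
    (ha : MemLp a 2 μ) (hb : MemLp b 2 μ) :
    ∫ x, ‖a x‖ * ‖b x‖ ∂μ ≤ √(∫ x, ‖a x‖ ^ 2 ∂μ) * √(∫ x, ‖b x‖ ^ 2 ∂μ) := by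
  have h := integral_mul_norm_le_Lp_mul_Lq (μ := μ) (f := fun x => ‖a x‖) (g := fun x => ‖b x‖)
    Real.HolderConjugate.two_two (by simpa using ha.norm) (by simpa using hb.norm)
  rw [Real.sqrt_eq_rpow, Real.sqrt_eq_rpow]
  simpa only [norm_norm, Real.rpow_two] using h

theorem tendsto_integral_norm_mul_norm_of_tendsto_integral_sq {a : ℕ → X → E} {b : X → F}
    (ha : ∀ n, MemLp (a n) 2 μ) (hb : MemLp b 2 μ)
    (ha_lim : Tendsto (fun n => ∫ x, ‖a n x‖ ^ 2 ∂μ) atTop (𝓝 0)) :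
    Tendsto (fun n => ∫ x, ‖a n x‖ * ‖b x‖ ∂μ) atTop (𝓝 0) := by
  have hbound : Tendsto (fun n => √(∫ x, ‖a n x‖ ^ 2 ∂μ) * √(∫ x, ‖b x‖ ^ 2 ∂μ)) atTop (𝓝 0) := by
    simpa using (ha_lim.sqrt).mul_const (√(∫ x, ‖b x‖ ^ 2 ∂μ))
  exact squeeze_zero (fun n => integral_nonneg fun x => by positivity)
    (fun n => integral_norm_mul_norm_le_sqrt (ha n) hb) hbound

end

section
variable {X : Type*} [MeasurableSpace X] {μ : Measure X}
  {E : Type*} [NormedAddCommGroup E] [InnerProductSpace ℝ E]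

theorem MeasureTheory.MemLp.integrable_inner {F v : X → E} (hF : MemLp F 2 μ) (hv : MemLp v 2 μ) :
    Integrable (fun x => inner ℝ (F x) (v x)) μ :=
  (hF.norm.integrable_mul hv.norm).mono (hF.1.inner hv.1)
    (ae_of_all _ fun x => by simpa [abs_mul] using norm_inner_le_norm (𝕜 := ℝ) (F x) (v x))

/-- The integrand of `J₁(v, ρ)` with `a = α ∘ ρ`, without the factor `1/2`. -/
def lowerOrderIntegrand (a : X → ℝ) (F v : X → E) (x : X) : ℝ :=
  a x * ‖v x‖ ^ 2 - 2 * inner ℝ (F x) (v x)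

theorem integrable_lowerOrderIntegrand {abar : ℝ} {a : X → ℝ} {F v : X → E}
    (ha : AEStronglyMeasurable a μ) (ha_bdd : ∀ᵐ x ∂μ, |a x| ≤ abar)
    (hF : MemLp F 2 μ) (hv : MemLp v 2 μ) :
    Integrable (lowerOrderIntegrand a F v) μ :=
  (hv.norm.integrable_sq.bdd_mul ha ha_bdd).sub ((hF.integrable_inner hv).const_mul 2)

theorem abs_integral_lowerOrderIntegrand_sub_le {abar : ℝ} {a a' : X → ℝ} {F v w : X → E}
    (ha : AEStronglyMeasurable a μ) (ha' : AEStronglyMeasurable a' μ)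
    (ha_bdd : ∀ᵐ x ∂μ, |a x| ≤ abar) (ha'_bdd : ∀ᵐ x ∂μ, |a' x| ≤ abar)
    (hF : MemLp F 2 μ) (hv : MemLp v 2 μ) (hw : MemLp w 2 μ) :
    |∫ x, lowerOrderIntegrand a F v x ∂μ - ∫ x, lowerOrderIntegrand a' F w x ∂μ| ≤
      abar * ∫ x, ‖v x - w x‖ ^ 2 ∂μ + 2 * abar * ∫ x, ‖v x - w x‖ * ‖w x‖ ∂μ
        + ∫ x, |a x - a' x| * ‖w x‖ ^ 2 ∂μ + 2 * ∫ x, ‖v x - w x‖ * ‖F x‖ ∂μ := by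
  have hvw : MemLp (fun x => v x - w x) 2 μ := hv.sub hw
  have i₁ : Integrable (fun x => ‖v x - w x‖ ^ 2) μ := hvw.norm.integrable_sq
  have i₂ : Integrable (fun x => ‖v x - w x‖ * ‖w x‖) μ := hvw.norm.integrable_mul hw.norm
  have i₃ : Integrable (fun x => |a x - a' x| * ‖w x‖ ^ 2) μ := by
    refine hw.norm.integrable_sq.bdd_mul (c := 2 * abar) (ha.sub ha').norm ?_
    filter_upwards [ha_bdd, ha'_bdd] with x hx hx'
    rw [Real.norm_eq_abs, abs_abs]
    linarith [abs_sub (a x) (a' x)]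
  have i₄ : Integrable (fun x => ‖v x - w x‖ * ‖F x‖) μ := hvw.norm.integrable_mul hF.norm
  have i₁' := i₁.const_mul abar
  have i₂' := i₂.const_mul (2 * abar)
  have i₄' := i₄.const_mul 2
  rw [← integral_sub (integrable_lowerOrderIntegrand ha ha_bdd hF hv)
    (integrable_lowerOrderIntegrand ha' ha'_bdd hF hw)]
  calc _ ≤ ∫ x, |lowerOrderIntegrand a F v x - lowerOrderIntegrand a' F w x| ∂μ :=
        abs_integral_le_integral_abs
    _ ≤ ∫ x, (abar * ‖v x - w x‖ ^ 2 + 2 * abar * (‖v x - w x‖ * ‖w x‖)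
          + |a x - a' x| * ‖w x‖ ^ 2 + 2 * (‖v x - w x‖ * ‖F x‖)) ∂μ := by
        refine integral_mono_ae (((integrable_lowerOrderIntegrand ha ha_bdd hF hv).sub
          (integrable_lowerOrderIntegrand ha' ha'_bdd hF hw)).abs)
          (((i₁'.add i₂').add i₃).add i₄') ?_
        filter_upwards [ha_bdd] with x hx
        exact abs_mul_norm_sq_sub_inner_sub_le hx (F x) (v x) (w x)
    _ = _ := by
        rw [integral_add, integral_add, integral_add, integral_const_mul, integral_const_mul,
          integral_const_mul]
        exacts [i₁', i₂', i₁'.add i₂', i₃, (i₁'.add i₂').add i₃, i₄']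

theorem tendsto_integral_lowerOrderIntegrand [IsFiniteMeasure μ] {abar : ℝ}
    {a : ℕ → X → ℝ} {a₀ : X → ℝ} {F : X → E} {v : ℕ → X → E} {v₀ : X → E}
    (ha : ∀ n, AEStronglyMeasurable (a n) μ) (ha₀ : AEStronglyMeasurable a₀ μ)
    (ha_bdd : ∀ n, ∀ᵐ x ∂μ, |a n x| ≤ abar) (ha₀_bdd : ∀ᵐ x ∂μ, |a₀ x| ≤ abar)
    (hF : MemLp F 2 μ) (hv : ∀ n, MemLp (v n) 2 μ) (hv₀ : MemLp v₀ 4 μ)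
    (ha_lim : Tendsto (fun n => ∫ x, (a n x - a₀ x) ^ 2 ∂μ) atTop (𝓝 0))
    (hv_lim : Tendsto (fun n => ∫ x, ‖v n x - v₀ x‖ ^ 2 ∂μ) atTop (𝓝 0)) :
    Tendsto (fun n => ∫ x, lowerOrderIntegrand (a n) F (v n) x ∂μ) atTop
      (𝓝 (∫ x, lowerOrderIntegrand a₀ F v₀ x ∂μ)) := by
  have hv₀_two : MemLp v₀ 2 μ := hv₀.mono_exponent (by norm_num)
  have hv₀_sq : MemLp (fun x => ‖v₀ x‖ ^ 2) 2 μ := by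
    have : (4 : ENNReal) / 2 = 2 := ((ENNReal.eq_div_iff two_ne_zero ENNReal.ofNat_ne_top).2
      (by norm_num)).symm
    simpa [Real.rpow_two, this] using hv₀.norm_rpow_div 2
  have hvv₀ : ∀ n, MemLp (fun x => v n x - v₀ x) 2 μ := fun n => (hv n).sub hv₀_two
  have haa₀ : ∀ n, MemLp (fun x => a n x - a₀ x) 2 μ := fun n =>
    MemLp.of_bound ((ha n).sub ha₀) (2 * abar) <| by
      filter_upwards [ha_bdd n, ha₀_bdd] with x hx hx₀
      rw [Real.norm_eq_abs]
      linarith [abs_sub (a n x) (a₀ x)]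
  have h₂ := tendsto_integral_norm_mul_norm_of_tendsto_integral_sq hvv₀ hv₀_two hv_lim
  have h₃ := tendsto_integral_norm_mul_norm_of_tendsto_integral_sq haa₀ hv₀_sq
    (by simpa only [Real.norm_eq_abs, sq_abs] using ha_lim)
  have h₄ := tendsto_integral_norm_mul_norm_of_tendsto_integral_sq hvv₀ hF hv_lim
  simp only [Real.norm_eq_abs, abs_pow, abs_norm] at h₃
  rw [← tendsto_sub_nhds_zero_iff]
  refine squeeze_zero_norm (fun n => abs_integral_lowerOrderIntegrand_sub_le (ha n) ha₀
    (ha_bdd n) ha₀_bdd hF (hv n) hv₀_two) ?_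
  simpa using (((hv_lim.const_mul abar).add (h₂.const_mul (2 * abar))).add h₃).add
    (h₄.const_mul 2)

theorem LipschitzOnWith.tendsto_integral_sq_comp_sub {K : ℝ≥0} {φ : ℝ → ℝ} {s : Set ℝ}
    (hφ : LipschitzOnWith K φ s) {r : ℕ → X → ℝ} {r₀ : X → ℝ}
    (hr : ∀ n, ∀ᵐ x ∂μ, r n x ∈ s) (hr₀ : ∀ᵐ x ∂μ, r₀ x ∈ s)
    (hr_int : ∀ n, Integrable (fun x => (r n x - r₀ x) ^ 2) μ)
    (hr_lim : Tendsto (fun n => ∫ x, (r n x - r₀ x) ^ 2 ∂μ) atTop (𝓝 0)) :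
    Tendsto (fun n => ∫ x, (φ (r n x) - φ (r₀ x)) ^ 2 ∂μ) atTop (𝓝 0) := by
  refine squeeze_zero (fun n => integral_nonneg fun x => sq_nonneg _) (fun n => ?_)
    (by simpa using hr_lim.const_mul ((K : ℝ) ^ 2))
  rw [← integral_const_mul]
  refine integral_mono_of_nonneg (ae_of_all _ fun x => sq_nonneg _) ((hr_int n).const_mul _) ?_
  filter_upwards [hr n, hr₀] with x hx hx₀
  have h := lipschitzOnWith_iff_dist_le_mul.1 hφ _ hx _ hx₀
  rw [Real.dist_eq, Real.dist_eq] at h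
  have := pow_le_pow_left₀ (abs_nonneg _) h 2
  rwa [mul_pow, sq_abs, sq_abs] at this

end

theorem J1_continuity_strong_general
    {d d' : ℕ}
    (Ω : Set (Fin d → ℝ))
    (hΩbdd : Bornology.IsBounded Ω)
    (abar L : ℝ)
    (α : ℝ → ℝ)
    (hαrange : ∀ y ∈ Set.Icc (0 : ℝ) 1, α y ∈ Set.Icc (0 : ℝ) abar)
    -- α is Lipschitz on [0,1] with Lipschitz constant L
    (hαLip : ∀ y ∈ Set.Icc (0 : ℝ) 1, ∀ z ∈ Set.Icc (0 : ℝ) 1, |α y - α z| ≤ L * |y - z|)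
    (f : (Fin d → ℝ) → EuclideanSpace ℝ (Fin d'))
    (hf : MemLp f 2 (volume.restrict Ω))
    (ρn : ℕ → (Fin d → ℝ) → ℝ) (ρ : (Fin d → ℝ) → ℝ)
    (hρnmeas : ∀ n, Measurable (ρn n)) (hρmeas : Measurable ρ)
    (hρn01 : ∀ n x, ρn n x ∈ Set.Icc (0 : ℝ) 1)
    (hρ01 : ∀ x, ρ x ∈ Set.Icc (0 : ℝ) 1)
    -- strong convergence of ρ_n to ρ in L²(Ω)
    (hρstrong : Tendsto (fun n => ∫ x in Ω, (ρn n x - ρ x) ^ 2) atTop (nhds 0))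
    (un : ℕ → (Fin d → ℝ) → EuclideanSpace ℝ (Fin d'))
    (u : (Fin d → ℝ) → EuclideanSpace ℝ (Fin d'))
    (hun : ∀ n, MemLp (un n) 2 (volume.restrict Ω))
    (hu : MemLp u 4 (volume.restrict Ω))
    -- strong convergence of u_n to u in L²(Ω)
    (hustrong : Tendsto (fun n => ∫ x in Ω, ‖un n x - u x‖ ^ 2) atTop (nhds 0)) :
    Tendsto (fun n =>
        ∫ x in Ω, (α (ρn n x) * ‖un n x‖ ^ 2 - 2 * (inner ℝ (f x) (un n x) : ℝ)))
      atTop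
      (nhds (∫ x in Ω, (α (ρ x) * ‖u x‖ ^ 2 - 2 * (inner ℝ (f x) (u x) : ℝ)))) := by
  have : IsFiniteMeasure (volume.restrict Ω) :=
    isFiniteMeasure_restrict.2 hΩbdd.measure_lt_top.ne
  have hαLip' : LipschitzOnWith L.toNNReal α (Set.Icc 0 1) :=
    lipschitzOnWith_iff_dist_le_mul.2 fun y hy z hz => by
      rw [Real.dist_eq, Real.dist_eq, Real.coe_toNNReal']
      exact (hαLip y hy z hz).trans (by gcongr; exact le_max_left _ _)
  have hαρ_meas : ∀ r : (Fin d → ℝ) → ℝ, Measurable r → (∀ x, r x ∈ Set.Icc (0 : ℝ) 1) →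
      AEStronglyMeasurable (fun x => α (r x)) (volume.restrict Ω) := fun r hr hr01 =>
    (hαLip'.continuousOn.measurable_comp hr hr01).aestronglyMeasurable
  have hα_abs : ∀ y ∈ Set.Icc (0 : ℝ) 1, |α y| ≤ abar := fun y hy =>
    abs_le.2 ⟨by linarith [(hαrange y hy).1, (hαrange y hy).2], (hαrange y hy).2⟩
  have hρ_sq : ∀ n, Integrable (fun x => (ρn n x - ρ x) ^ 2) (volume.restrict Ω) := fun n =>
    (MemLp.of_bound ((hρnmeas n).sub hρmeas).aestronglyMeasurable 1 <| ae_of_all _ fun x =>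
      abs_sub_le_of_nonneg_of_le (hρn01 n x).1 (hρn01 n x).2 (hρ01 x).1 (hρ01 x).2).integrable_sq
  exact tendsto_integral_lowerOrderIntegrand (abar := abar)
    (fun n => hαρ_meas _ (hρnmeas n) (hρn01 n)) (hαρ_meas _ hρmeas hρ01)
    (fun n => ae_of_all _ fun x => hα_abs _ (hρn01 n x)) (ae_of_all _ fun x => hα_abs _ (hρ01 x))
    hf hun hu
    (hαLip'.tendsto_integral_sq_comp_sub (fun n => ae_of_all _ (hρn01 n)) (ae_of_all _ hρ01)
      hρ_sq hρstrong)
    hustrong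

/-- Continuity of the lower-order part of the Borrvall–Petersson functional under
strong `L²` convergence of `ρ_n` and `u_n`, for Lipschitz `α : [0,1] → [0, ᾱ]` and
`u ∈ L⁴(Ω)^{d'}`. -/
theorem J1_continuity_strong
    {d d' : ℕ} (hd : 1 ≤ d) (hd' : 1 ≤ d')
    (Ω : Set (Fin d → ℝ)) (hΩmeas : MeasurableSet Ω)
    (hΩbdd : Bornology.IsBounded Ω) (hΩpos : 0 < volume Ω)
    (abar L : ℝ) (habar : 0 < abar) (hL : 0 ≤ L)
    (α : ℝ → ℝ)
    (hαrange : ∀ y ∈ Set.Icc (0 : ℝ) 1, α y ∈ Set.Icc (0 : ℝ) abar)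
    -- α is Lipschitz on [0,1] with Lipschitz constant L
    (hαLip : ∀ y ∈ Set.Icc (0 : ℝ) 1, ∀ z ∈ Set.Icc (0 : ℝ) 1, |α y - α z| ≤ L * |y - z|)
    (f : (Fin d → ℝ) → EuclideanSpace ℝ (Fin d'))
    (hf : MemLp f 2 (volume.restrict Ω))
    (ρn : ℕ → (Fin d → ℝ) → ℝ) (ρ : (Fin d → ℝ) → ℝ)
    (hρnmeas : ∀ n, Measurable (ρn n)) (hρmeas : Measurable ρ)
    (hρn01 : ∀ n x, ρn n x ∈ Set.Icc (0 : ℝ) 1)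
    (hρ01 : ∀ x, ρ x ∈ Set.Icc (0 : ℝ) 1)
    -- strong convergence of ρ_n to ρ in L²(Ω)
    (hρstrong : Tendsto (fun n => ∫ x in Ω, (ρn n x - ρ x) ^ 2) atTop (nhds 0))
    (un : ℕ → (Fin d → ℝ) → EuclideanSpace ℝ (Fin d'))
    (u : (Fin d → ℝ) → EuclideanSpace ℝ (Fin d'))
    (hun : ∀ n, MemLp (un n) 2 (volume.restrict Ω))
    (hu : MemLp u 4 (volume.restrict Ω))
    -- strong convergence of u_n to u in L²(Ω)
    (hustrong : Tendsto (fun n => ∫ x in Ω, ‖un n x - u x‖ ^ 2) atTop (nhds 0)) :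
    Tendsto (fun n =>
        ∫ x in Ω, (α (ρn n x) * ‖un n x‖ ^ 2 - 2 * (inner ℝ (f x) (un n x) : ℝ)))
      atTop
      (nhds (∫ x in Ω, (α (ρ x) * ‖u x‖ ^ 2 - 2 * (inner ℝ (f x) (u x) : ℝ)))) :=
  J1_continuity_strong_general Ω hΩbdd abar L α hαrange hαLip f hf ρn ρ hρnmeas hρmeas hρn01 hρ01
    hρstrong un u hun hu hustrong
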